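/- Let a₁ = (1,1,1)/√3, a₂ = (1,−1,−1)/√3, a₃ = (−1,1,−1)/√3, a₄ = (−1,−1,1)/√3 ∈ ℝ³, fix θ ∈ ℝ³ with ‖θ‖ ≤ 1, and consider the random vector v taking the value 3aᵢ with probability pᵢ = ¼(1 + aᵢ·θ) for i = 1, …, 4. Then the mean quadratic error matrix E[(v − θ)(v − θ)ᵗ] equals the 3×3 symmetric matrix M^{min}(θ) with diagonal entries 3 − θ₁², 3 − θ₂², 3 − θ₃² and off-diagonal entries (1,2): √3·θ₃ − θ₁θ₂, (1,3): √3·θ₂ − θ₁θ₃, (2,3): √3·θ₁ − θ₂θ₃. -/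

import Mathlib

open MeasureTheory

/-- The four Bloch vectors of minimal qubit tomography. -/
noncomputable def tetraStmt18 : Fin 4 → Fin 3 → ℝ :=
  fun i => (Real.sqrt 3)⁻¹ • ![![1, 1, 1], ![1, -1, -1], ![-1, 1, -1], ![-1, -1, 1]] i

/-! The events `{v = 3aₖ}` are disjoint and their probabilities `pₖ` add up to `1` because the
`aₖ` add up to `0`. Since `ENNReal.ofReal` sends negative numbers to `0`, the total mass
`∑ max pₖ 0 ≤ 1 = ∑ pₖ` forces every `pₖ ≥ 0`; hence `v` is almost surely one of the `3aₖ`, and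
the mean quadratic error is the finite sum `∑ pₖ (3aₖ - θ)(3aₖ - θ)ᵗ`. -/

open Finset Function

section DiscreteLaw

variable {Ω ι : Type*} [MeasurableSpace Ω] {P : Measure Ω} [IsProbabilityMeasure P] [Fintype ι]
  {A : ι → Set Ω} {p : ι → ℝ}

theorem measureReal_eq_of_measure_eq_ofReal (hA : ∀ k, MeasurableSet (A k))
    (hdisj : Pairwise (Disjoint on A)) (hP : ∀ k, P (A k) = ENNReal.ofReal (p k))
    (hp : ∑ k, p k = 1) (k : ι) : P.real (A k) = p k := by
  have hreal : ∀ k, P.real (A k) = max (p k) 0 := fun k => by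
    rw [measureReal_def, hP, ENNReal.toReal_ofReal']
  have htotal : ∑ k, max (p k) 0 ≤ ∑ k, p k :=
    calc ∑ k, max (p k) 0 = P.real (⋃ k, A k) := by
          simp only [measureReal_iUnion_fintype (μ := P) hdisj hA, hreal]
      _ ≤ 1 := measureReal_le_one
      _ = ∑ k, p k := hp.symm
  have hmax := (sum_eq_sum_iff_of_le fun k _ => le_max_left (p k) 0).1
    (le_antisymm (sum_le_sum fun k _ => le_max_left _ _) htotal) k (mem_univ k)
  rw [hreal, ← hmax]

theorem ae_exists_mem_of_measure_eq_ofReal (hA : ∀ k, MeasurableSet (A k))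
    (hdisj : Pairwise (Disjoint on A)) (hP : ∀ k, P (A k) = ENNReal.ofReal (p k))
    (hp : ∑ k, p k = 1) : ∀ᵐ ω ∂P, ∃ k, ω ∈ A k := by
  have hunion : P.real (⋃ k, A k) = 1 := by
    rw [measureReal_iUnion_fintype (μ := P) hdisj hA]
    simp only [measureReal_eq_of_measure_eq_ofReal hA hdisj hP hp, hp]
  simp only [← Set.mem_iUnion]
  rwa [ae_mem_iff_measure_eq (MeasurableSet.iUnion hA).nullMeasurableSet, measure_univ,
    ← ENNReal.toReal_eq_one_iff]

theorem integral_comp_eq_sum_of_ae_exists_eq {E F : Type*} [MeasurableSpace E]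
    [MeasurableSingletonClass E] [NormedAddCommGroup F] [NormedSpace ℝ F] [CompleteSpace F]
    {v : Ω → E} (hv : Measurable v) {x : ι → E} (hx : Injective x)
    (hrange : ∀ᵐ ω ∂P, ∃ k, v ω = x k) (f : E → F) :
    ∫ ω, f (v ω) ∂P = ∑ k, P.real {ω | v ω = x k} • f (x k) := by
  classical
  have hfv : (fun ω => f (v ω)) =ᵐ[P]
      fun ω => ∑ k, {ω | v ω = x k}.indicator (fun _ => f (x k)) ω := by
    filter_upwards [hrange] with ω ⟨k, hk⟩
    simp [Set.indicator_apply, hk, hx.eq_iff]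
  have hmeas : ∀ k, MeasurableSet {ω | v ω = x k} := fun k => hv (measurableSet_singleton _)
  rw [integral_congr_ae hfv,
    integral_finsetSum _ fun k _ => (integrable_const _).indicator (hmeas k)]
  exact sum_congr rfl fun k _ => integral_indicator_const _ (hmeas k)

theorem integral_comp_eq_sum_of_measure_eq_ofReal {E F : Type*} [MeasurableSpace E]
    [MeasurableSingletonClass E] [NormedAddCommGroup F] [NormedSpace ℝ F] [CompleteSpace F]
    {v : Ω → E} (hv : Measurable v) {x : ι → E} (hx : Injective x)
    (hP : ∀ k, P {ω | v ω = x k} = ENNReal.ofReal (p k)) (hp : ∑ k, p k = 1) (f : E → F) :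
    ∫ ω, f (v ω) ∂P = ∑ k, p k • f (x k) := by
  have hA : ∀ k, MeasurableSet {ω | v ω = x k} := fun k => hv (measurableSet_singleton _)
  have hdisj : Pairwise (Disjoint on fun k => {ω | v ω = x k}) := fun k l hkl =>
    (Set.disjoint_singleton.2 (hx.ne hkl)).preimage v
  rw [integral_comp_eq_sum_of_ae_exists_eq hv hx
    (ae_exists_mem_of_measure_eq_ofReal hA hdisj hP hp) f]
  simp only [measureReal_eq_of_measure_eq_ofReal hA hdisj hP hp]

end DiscreteLaw

theorem tetraStmt18_injective : Injective tetraStmt18 := by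
  refine (smul_right_injective _ (by positivity : (Real.sqrt 3)⁻¹ ≠ 0)).comp ?_
  intro k l h
  fin_cases k <;> fin_cases l <;> first | rfl | norm_num at h

noncomputable def minimalProb (θ : EuclideanSpace ℝ (Fin 3)) (k : Fin 4) : ℝ :=
  (1 + ∑ j, tetraStmt18 k j * θ j) / 4

noncomputable def minimalMQE (θ : EuclideanSpace ℝ (Fin 3)) : Matrix (Fin 3) (Fin 3) ℝ :=
  Matrix.of
    ![![3 - θ 0 ^ 2, Real.sqrt 3 * θ 2 - θ 0 * θ 1, Real.sqrt 3 * θ 1 - θ 0 * θ 2],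
      ![Real.sqrt 3 * θ 2 - θ 0 * θ 1, 3 - θ 1 ^ 2, Real.sqrt 3 * θ 0 - θ 1 * θ 2],
      ![Real.sqrt 3 * θ 1 - θ 0 * θ 2, Real.sqrt 3 * θ 0 - θ 1 * θ 2, 3 - θ 2 ^ 2]]

theorem sum_minimalProb (θ : EuclideanSpace ℝ (Fin 3)) : ∑ k, minimalProb θ k = 1 := by
  simp only [minimalProb, tetraStmt18, Fin.sum_univ_four, Fin.sum_univ_three, Pi.smul_apply,
    smul_eq_mul, Matrix.cons_val, Matrix.cons_val_zero, Matrix.cons_val_one]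
  ring

theorem sum_minimalProb_mul_errors_eq_minimalMQE (θ : EuclideanSpace ℝ (Fin 3)) (i j : Fin 3) :
    ∑ k, minimalProb θ k *
      ((((3 : ℝ) • tetraStmt18 k) i - θ i) * (((3 : ℝ) • tetraStmt18 k) j - θ j)) =
        minimalMQE θ i j := by
  have h3 : Real.sqrt 3 ^ 2 = 3 := Real.sq_sqrt (by norm_num)
  have h4 : Real.sqrt 3 ^ 3 = 3 * Real.sqrt 3 := by rw [pow_succ, h3]
  have h5 : Real.sqrt 3 ^ 4 = 9 := by rw [pow_succ, h4, mul_assoc, ← sq, h3]; norm_num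
  fin_cases i <;> fin_cases j <;>
    simp only [minimalProb, minimalMQE, tetraStmt18, Matrix.of_apply, Fin.sum_univ_four,
      Fin.sum_univ_three, Pi.smul_apply, smul_eq_mul, Matrix.cons_val, Matrix.cons_val_zero,
      Matrix.cons_val_one, Fin.isValue, Fin.zero_eta, Fin.mk_one, Fin.reduceFinMk] <;>
    field_simp <;> ring_nf <;> simp only [h4, h5] <;> ring

theorem minimal_tomography_mqe_general {Ω : Type*} [MeasurableSpace Ω]
    (P : Measure Ω) [IsProbabilityMeasure P]
    (θ : EuclideanSpace ℝ (Fin 3))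
    (v : Ω → Fin 3 → ℝ) (hv : Measurable v)
    (hprob : ∀ i : Fin 4,
      P {ω | v ω = (3 : ℝ) • tetraStmt18 i} =
        ENNReal.ofReal ((1 + ∑ j, tetraStmt18 i j * θ j) / 4)) :
    ∀ i j, ∫ ω, (v ω i - θ i) * (v ω j - θ j) ∂P =
      Matrix.of
        ![![3 - θ 0 ^ 2, Real.sqrt 3 * θ 2 - θ 0 * θ 1, Real.sqrt 3 * θ 1 - θ 0 * θ 2],
          ![Real.sqrt 3 * θ 2 - θ 0 * θ 1, 3 - θ 1 ^ 2, Real.sqrt 3 * θ 0 - θ 1 * θ 2],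
          ![Real.sqrt 3 * θ 1 - θ 0 * θ 2, Real.sqrt 3 * θ 0 - θ 1 * θ 2, 3 - θ 2 ^ 2]] i j := by
  intro i j
  have hx : Injective fun k => (3 : ℝ) • tetraStmt18 k :=
    (smul_right_injective _ three_ne_zero).comp tetraStmt18_injective
  rw [integral_comp_eq_sum_of_measure_eq_ofReal (p := minimalProb θ) hv hx hprob
    (sum_minimalProb θ) fun y => (y i - θ i) * (y j - θ j)]
  exact sum_minimalProb_mul_errors_eq_minimalMQE θ i j

/-- a random vector `v` taking the values `3aᵢ` (the Bloch vectors of the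
minimal qubit tomography estimates) with probabilities `pᵢ = ¼(1 + aᵢ·θ)` has mean quadratic
error matrix `E[(v−θ)(v−θ)ᵗ] = M^min(θ)`, the symmetric matrix with diagonal `3 − θᵢ²` and
off-diagonal entries `√3θ₃ − θ₁θ₂`, `√3θ₂ − θ₁θ₃`, `√3θ₁ − θ₂θ₃`. -/
theorem minimal_tomography_mqe {Ω : Type*} [MeasurableSpace Ω]
    (P : Measure Ω) [IsProbabilityMeasure P]
    (θ : EuclideanSpace ℝ (Fin 3)) (hθ : ‖θ‖ ≤ 1)
    (v : Ω → Fin 3 → ℝ) (hv : Measurable v)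
    (hprob : ∀ i : Fin 4,
      P {ω | v ω = (3 : ℝ) • tetraStmt18 i} =
        ENNReal.ofReal ((1 + ∑ j, tetraStmt18 i j * θ j) / 4)) :
    ∀ i j, ∫ ω, (v ω i - θ i) * (v ω j - θ j) ∂P =
      Matrix.of
        ![![3 - θ 0 ^ 2, Real.sqrt 3 * θ 2 - θ 0 * θ 1, Real.sqrt 3 * θ 1 - θ 0 * θ 2],
          ![Real.sqrt 3 * θ 2 - θ 0 * θ 1, 3 - θ 1 ^ 2, Real.sqrt 3 * θ 0 - θ 1 * θ 2],
          ![Real.sqrt 3 * θ 1 - θ 0 * θ 2, Real.sqrt 3 * θ 0 - θ 1 * θ 2, 3 - θ 2 ^ 2]] i j :=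
  minimal_tomography_mqe_general P θ v hv hprob
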